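/- Fix real numbers a, b, c1, c2 and λ ∈ ℂ. Let q1(x,t) = c1·e^{i(ax+bt)} and q2(x,t) = c2·e^{i(ax+bt)}, and build from them the Lax matrices U(λ) = i·λ·J + Q and V(λ) = 2i·λ²·J + 2λ·Q + i·J·(Q² − Qₓ). Let Ω be the constant matrix with rows (−iλ − ia/2, c1, c2), (−c1, iλ + ia/2, 0), (−c2, 0, iλ + ia/2), and Λ the constant matrix with rows (−2iλ² + i(c1²+c2²) − ib/2, (2λ−a)c1, (2λ−a)c2), ((a−2λ)c1, 2iλ² − ic1² + ib/2, −ic1c2), ((a−2λ)c2, −ic1c2, 2iλ² − ic2² + ib/2). Let R(x,t) = diag(e^{i(ax+bt)/2}, e^{−i(ax+bt)/2}, e^{−i(ax+bt)/2}). If Φ : ℝ × ℝ → ℂ³ is differentiable and satisfies ∂Φ/∂x = Ω·Φ and ∂Φ/∂t = Λ·Φ, then Ψ := R·Φ satisfies the Lax pair equations ∂Ψ/∂x = U(λ)·Ψ and ∂Ψ/∂t = V(λ)·Ψ. -/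

import Mathlib

open Complex Matrix

noncomputable section

/-- The constant matrix `J = diag(−1, 1, 1)`. -/
def Jmat : Matrix (Fin 3) (Fin 3) ℂ := Matrix.diagonal ![-1, 1, 1]

/-- The plane-wave seed `q1(x,t) = c1·e^{i(ax+bt)}`. -/
def seed (c a b : ℝ) (p : ℝ × ℝ) : ℂ :=
  (c : ℂ) * Complex.exp (Complex.I * ((a : ℂ) * p.1 + (b : ℂ) * p.2))

/-- The potential matrix `Q` with rows `(0, q1, q2)`, `(−q1*, 0, 0)`, `(−q2*, 0, 0)`. -/
def Qmat (q1 q2 : ℝ × ℝ → ℂ) (p : ℝ × ℝ) : Matrix (Fin 3) (Fin 3) ℂ :=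
  !![0, q1 p, q2 p;
     -(starRingEnd ℂ) (q1 p), 0, 0;
     -(starRingEnd ℂ) (q2 p), 0, 0]

/-- `Qₓ`: the entrywise partial derivative of `Q` with respect to `x`. -/
def Qxmat (q1 q2 : ℝ × ℝ → ℂ) (p : ℝ × ℝ) : Matrix (Fin 3) (Fin 3) ℂ :=
  Matrix.of fun i j => deriv (fun x' => Qmat q1 q2 (x', p.2) i j) p.1

/-- `U(λ) = i·λ·J + Q`. -/
def Umat (q1 q2 : ℝ × ℝ → ℂ) (lam : ℂ) (p : ℝ × ℝ) : Matrix (Fin 3) (Fin 3) ℂ :=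
  (Complex.I * lam) • Jmat + Qmat q1 q2 p

/-- `V(λ) = 2i·λ²·J + 2λ·Q + i·J·(Q² − Qₓ)`. -/
def Vmat (q1 q2 : ℝ × ℝ → ℂ) (lam : ℂ) (p : ℝ × ℝ) : Matrix (Fin 3) (Fin 3) ℂ :=
  (2 * Complex.I * lam ^ 2) • Jmat + (2 * lam) • Qmat q1 q2 p
    + Complex.I • (Jmat * (Qmat q1 q2 p * Qmat q1 q2 p - Qxmat q1 q2 p))

/-- The constant matrix `Ω`. -/
def OmegaMat (a c1 c2 : ℝ) (lam : ℂ) : Matrix (Fin 3) (Fin 3) ℂ :=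
  !![-Complex.I * lam - Complex.I * (a : ℂ) / 2, (c1 : ℂ), (c2 : ℂ);
     -(c1 : ℂ), Complex.I * lam + Complex.I * (a : ℂ) / 2, 0;
     -(c2 : ℂ), 0, Complex.I * lam + Complex.I * (a : ℂ) / 2]

/-- The constant matrix `Λ`. -/
def LambdaMat (a b c1 c2 : ℝ) (lam : ℂ) : Matrix (Fin 3) (Fin 3) ℂ :=
  !![-2 * Complex.I * lam ^ 2 + Complex.I * ((c1 : ℂ) ^ 2 + (c2 : ℂ) ^ 2)
        - Complex.I * (b : ℂ) / 2,
      (2 * lam - (a : ℂ)) * (c1 : ℂ), (2 * lam - (a : ℂ)) * (c2 : ℂ);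
     ((a : ℂ) - 2 * lam) * (c1 : ℂ),
      2 * Complex.I * lam ^ 2 - Complex.I * (c1 : ℂ) ^ 2 + Complex.I * (b : ℂ) / 2,
      -Complex.I * (c1 : ℂ) * (c2 : ℂ);
     ((a : ℂ) - 2 * lam) * (c2 : ℂ), -Complex.I * (c1 : ℂ) * (c2 : ℂ),
      2 * Complex.I * lam ^ 2 - Complex.I * (c2 : ℂ) ^ 2 + Complex.I * (b : ℂ) / 2]

/-- The diagonal gauge matrix `R(x,t) = diag(e^{i(ax+bt)/2}, e^{−i(ax+bt)/2}, e^{−i(ax+bt)/2})`. -/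
def Rmat (a b : ℝ) (p : ℝ × ℝ) : Matrix (Fin 3) (Fin 3) ℂ :=
  Matrix.diagonal
    ![Complex.exp (Complex.I * ((a : ℂ) * p.1 + (b : ℂ) * p.2) / 2),
      Complex.exp (-(Complex.I * ((a : ℂ) * p.1 + (b : ℂ) * p.2)) / 2),
      Complex.exp (-(Complex.I * ((a : ℂ) * p.1 + (b : ℂ) * p.2)) / 2)]

/-!
With `θ = a x + b t` the gauge is `R = exp (-(i θ / 2) J)`, so `Rₓ = R (-(i a / 2) J)` and
`R_t = R (-(i b / 2) J)`. For `Ψ = R Φ` the product rule gives `Ψₓ = R (-(i a / 2) J + Ω) Φ` and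
`Ψ_t = R (-(i b / 2) J + Λ) Φ`, so the Lax pair reduces to the pointwise matrix identities
`U R = R (-(i a / 2) J + Ω)` and `V R = R (-(i b / 2) J + Λ)`. These hold because `R` conjugates
the plane-wave potential to a constant one: with `e = exp (i θ / 2)` we have `R = diag(e, e⁻¹, e⁻¹)`,
`q_k = c_k e²` and `q̄_k = c_k e⁻²`, and every entry becomes a polynomial identity in `e`, `e⁻¹`.
-/

section Gauge

variable {𝕜 : Type*} [NontriviallyNormedField 𝕜] {n : Type*} [Fintype n]
  {𝔸 : Type*} [NormedRing 𝔸] [NormedAlgebra 𝕜 𝔸]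
  {R : 𝕜 → Matrix n n 𝔸} {R' : Matrix n n 𝔸} {f : 𝕜 → n → 𝔸} {f' : n → 𝔸} {x : 𝕜}

theorem hasDerivAt_mulVec_apply (hR : ∀ i j, HasDerivAt (fun y => R y i j) (R' i j) x)
    (hf : ∀ j, HasDerivAt (fun y => f y j) (f' j) x) (i : n) :
    HasDerivAt (fun y => (R y *ᵥ f y) i) ((R' *ᵥ f x) i + (R x *ᵥ f') i) x := by
  simp only [mulVec, dotProduct, ← Finset.sum_add_distrib]
  exact HasDerivAt.fun_sum fun j _ => (hR i j).fun_mul (hf j)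

theorem hasDerivAt_gauge_mulVec_apply {K A U : Matrix n n 𝔸}
    (hR : ∀ i j, HasDerivAt (fun y => R y i j) ((R x * K) i j) x)
    (hf : ∀ j, HasDerivAt (fun y => f y j) ((A *ᵥ f x) j) x)
    (hU : U * R x = R x * (K + A)) (i : n) :
    HasDerivAt (fun y => (R y *ᵥ f y) i) ((U *ᵥ (R x *ᵥ f x)) i) x := by
  convert hasDerivAt_mulVec_apply hR hf i using 1
  rw [mulVec_mulVec, hU, mul_add, add_mulVec, ← mulVec_mulVec, ← mulVec_mulVec, Pi.add_apply]

end Gauge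

theorem hasDerivAt_diagonal_apply {𝕜 : Type*} [NontriviallyNormedField 𝕜] {n : Type*}
    [DecidableEq n] {E : Type*} [NormedAddCommGroup E] [NormedSpace 𝕜 E] {d : 𝕜 → n → E}
    {d' : n → E} {x : 𝕜} (hd : ∀ i, HasDerivAt (fun y => d y i) (d' i) x) (i j : n) :
    HasDerivAt (fun y => diagonal (d y) i j) (diagonal d' i j) x := by
  by_cases hij : i = j
  · subst hij; simpa using hd i
  · simpa [diagonal_apply_ne _ hij] using hasDerivAt_const x (0 : E)

theorem hasDerivAt_partial_fst {E : Type*} [NormedAddCommGroup E]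
    [NormedSpace ℝ E] {f : ℝ × ℝ → E} (hf : Differentiable ℝ f) (x t : ℝ) :
    HasDerivAt (fun y : ℝ => f (y, t)) (deriv (fun y : ℝ => f (y, t)) x) x :=
  (hf.comp (differentiable_id.prodMk (differentiable_const t)) x).hasDerivAt

theorem hasDerivAt_partial_snd {E : Type*} [NormedAddCommGroup E]
    [NormedSpace ℝ E] {f : ℝ × ℝ → E} (hf : Differentiable ℝ f) (x t : ℝ) :
    HasDerivAt (fun y : ℝ => f (x, y)) (deriv (fun y : ℝ => f (x, y)) t) t :=
  (hf.comp ((differentiable_const x).prodMk differentiable_id) t).hasDerivAt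

theorem hasDerivAt_phase_fst (a b t x : ℝ) :
    HasDerivAt (fun y : ℝ => I * (a * y + b * t)) (I * a) x := by
  simpa using (((hasDerivAt_id x).ofReal_comp.const_mul (a : ℂ)).add_const (b * t : ℂ)).const_mul I

theorem Rmat_hasDerivAt_fst (a b t x : ℝ) (i j : Fin 3) :
    HasDerivAt (fun y => Rmat a b (y, t) i j)
      ((Rmat a b (x, t) * (-(I * a / 2)) • Jmat) i j) x := by
  have hplus := ((hasDerivAt_phase_fst a b t x).div_const 2).cexp
  have hminus := ((hasDerivAt_phase_fst a b t x).fun_neg.div_const 2).cexp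
  rw [Rmat, Jmat, ← diagonal_smul, diagonal_mul_diagonal]
  refine hasDerivAt_diagonal_apply (fun k => ?_) i j
  fin_cases k <;>
    [refine hplus.congr_deriv ?_; refine hminus.congr_deriv ?_; refine hminus.congr_deriv ?_] <;>
    simp only [Fin.reduceFinMk, cons_val, Pi.smul_apply, smul_eq_mul] <;> ring

theorem Rmat_swap (a b x t : ℝ) : Rmat a b (x, t) = Rmat b a (t, x) := by
  simp only [Rmat, add_comm]

theorem Rmat_hasDerivAt_snd (a b x t : ℝ) (i j : Fin 3) :
    HasDerivAt (fun y => Rmat a b (x, y) i j)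
      ((Rmat a b (x, t) * (-(I * b / 2)) • Jmat) i j) t := by
  simpa only [Rmat_swap a b] using Rmat_hasDerivAt_fst b a x t i j

theorem seed_hasDerivAt_fst (c a b t x : ℝ) :
    HasDerivAt (fun y => seed c a b (y, t)) (I * a * seed c a b (x, t)) x :=
  ((hasDerivAt_phase_fst a b t x).cexp.const_mul (c : ℂ)).congr_deriv (by rw [seed]; ring)

theorem Qxmat_eq_Qmat {q1 q2 q1' q2' : ℝ × ℝ → ℂ}
    (h1 : ∀ x t, HasDerivAt (fun y => q1 (y, t)) (q1' (x, t)) x)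
    (h2 : ∀ x t, HasDerivAt (fun y => q2 (y, t)) (q2' (x, t)) x) (p : ℝ × ℝ) :
    Qxmat q1 q2 p = Qmat q1' q2' p := by
  ext i j
  fin_cases i <;> fin_cases j <;> simp only [Qxmat, Qmat, of_apply, cons_val', cons_val_fin_one,
    Fin.reduceFinMk, cons_val, deriv_const', deriv.fun_neg', neg_inj]
  · exact (h1 p.1 p.2).deriv
  · exact (h2 p.1 p.2).deriv
  · exact (h1 p.1 p.2).star.deriv
  · exact (h2 p.1 p.2).star.deriv

theorem Rmat_eq_diagonal (a b : ℝ) (p : ℝ × ℝ) :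
    Rmat a b p = diagonal ![cexp (I * (a * p.1 + b * p.2) / 2),
      (cexp (I * (a * p.1 + b * p.2) / 2))⁻¹, (cexp (I * (a * p.1 + b * p.2) / 2))⁻¹] := by
  simp only [Rmat, neg_div, Complex.exp_neg]

theorem seed_eq_sq (c a b : ℝ) (p : ℝ × ℝ) :
    seed c a b p = c * cexp (I * (a * p.1 + b * p.2) / 2) ^ 2 := by
  rw [seed, ← Complex.exp_nat_mul]
  ring_nf

theorem conj_seed_eq_sq (c a b : ℝ) (p : ℝ × ℝ) :
    starRingEnd ℂ (seed c a b p) = c * (cexp (I * (a * p.1 + b * p.2) / 2) ^ 2)⁻¹ := by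
  rw [seed, map_mul, Complex.conj_ofReal, ← Complex.exp_conj, ← Complex.exp_nat_mul,
    ← Complex.exp_neg]
  congr 2
  simp only [map_mul, map_add, Complex.conj_I, Complex.conj_ofReal]
  ring

theorem Umat_mul_Rmat (a b c1 c2 : ℝ) (lam : ℂ) (p : ℝ × ℝ) :
    Umat (seed c1 a b) (seed c2 a b) lam p * Rmat a b p
      = Rmat a b p * (-(I * a / 2) • Jmat + OmegaMat a c1 c2 lam) := by
  have he := Complex.exp_ne_zero (I * (a * p.1 + b * p.2) / 2)
  simp only [Umat, Qmat, conj_seed_eq_sq]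
  simp only [Rmat_eq_diagonal, seed_eq_sq]
  generalize cexp (I * (a * p.1 + b * p.2) / 2) = e at he ⊢
  ext i j
  rw [mul_diagonal, diagonal_mul]
  fin_cases i <;> fin_cases j <;>
    simp only [Jmat, OmegaMat, Matrix.add_apply, Matrix.smul_apply, of_apply, cons_val',
      cons_val_fin_one, Fin.reduceFinMk, cons_val, diagonal_apply, Fin.reduceEq, if_true,
      if_false, smul_eq_mul] <;>
    field_simp <;> ring

theorem Qxmat_seed (c1 c2 a b : ℝ) (p : ℝ × ℝ) :
    Qxmat (seed c1 a b) (seed c2 a b) p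
      = Qmat (fun p => I * a * seed c1 a b p) (fun p => I * a * seed c2 a b p) p :=
  Qxmat_eq_Qmat (fun x t => seed_hasDerivAt_fst c1 a b t x)
    (fun x t => seed_hasDerivAt_fst c2 a b t x) p

theorem Vmat_mul_Rmat (a b c1 c2 : ℝ) (lam : ℂ) (p : ℝ × ℝ) :
    Vmat (seed c1 a b) (seed c2 a b) lam p * Rmat a b p
      = Rmat a b p * (-(I * b / 2) • Jmat + LambdaMat a b c1 c2 lam) := by
  have he := Complex.exp_ne_zero (I * (a * p.1 + b * p.2) / 2)
  simp only [Vmat, Qxmat_seed, Qmat, map_mul, Complex.conj_I, Complex.conj_ofReal,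
    conj_seed_eq_sq]
  simp only [Rmat_eq_diagonal, seed_eq_sq]
  generalize cexp (I * (a * p.1 + b * p.2) / 2) = e at he ⊢
  ext i j
  rw [mul_diagonal, diagonal_mul]
  fin_cases i <;> fin_cases j <;>
    simp only [Jmat, LambdaMat, mul_apply, Fin.sum_univ_three, Matrix.sub_apply, Matrix.add_apply,
      Matrix.smul_apply, of_apply, cons_val', cons_val_fin_one, Fin.reduceFinMk, cons_val,
      diagonal_apply, Fin.reduceEq, if_true, if_false, smul_eq_mul] <;>
    field_simp <;> ring_nf <;> simp only [Complex.I_sq] <;> ring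

/-- if `Φ` is differentiable and solves the constant-coefficient system
`∂Φ/∂x = Ω·Φ`, `∂Φ/∂t = Λ·Φ`, then `Ψ := R·Φ` solves the Lax pair
`∂Ψ/∂x = U(λ)·Ψ`, `∂Ψ/∂t = V(λ)·Ψ` of the Manakov system for the plane-wave seed. -/
theorem gauge_transform_solves_lax_pair (a b c1 c2 : ℝ) (lam : ℂ)
    (Φ : ℝ × ℝ → Fin 3 → ℂ) (hΦ : Differentiable ℝ Φ)
    (hx : ∀ x t : ℝ,
      (fun i => deriv (fun x' => Φ (x', t) i) x) = OmegaMat a c1 c2 lam *ᵥ Φ (x, t))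
    (ht : ∀ x t : ℝ,
      (fun i => deriv (fun t' => Φ (x, t') i) t) = LambdaMat a b c1 c2 lam *ᵥ Φ (x, t)) :
    ∀ x t : ℝ, ∀ i : Fin 3,
      deriv (fun x' => (Rmat a b (x', t) *ᵥ Φ (x', t)) i) x
        = (Umat (seed c1 a b) (seed c2 a b) lam (x, t) *ᵥ (Rmat a b (x, t) *ᵥ Φ (x, t))) i ∧
      deriv (fun t' => (Rmat a b (x, t') *ᵥ Φ (x, t')) i) t
        = (Vmat (seed c1 a b) (seed c2 a b) lam (x, t) *ᵥ (Rmat a b (x, t) *ᵥ Φ (x, t))) i := by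
  intro x t i
  have hΦx : ∀ j, HasDerivAt (fun y => Φ (y, t) j) ((OmegaMat a c1 c2 lam *ᵥ Φ (x, t)) j) x :=
    fun j => (hasDerivAt_partial_fst (differentiable_pi.mp hΦ j) x t).congr_deriv
      (congrFun (hx x t) j)
  have hΦt : ∀ j, HasDerivAt (fun y => Φ (x, y) j) ((LambdaMat a b c1 c2 lam *ᵥ Φ (x, t)) j) t :=
    fun j => (hasDerivAt_partial_snd (differentiable_pi.mp hΦ j) x t).congr_deriv
      (congrFun (ht x t) j)
  exact ⟨(hasDerivAt_gauge_mulVec_apply (Rmat_hasDerivAt_fst a b t x) hΦx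
      (Umat_mul_Rmat a b c1 c2 lam (x, t)) i).deriv,
    (hasDerivAt_gauge_mulVec_apply (Rmat_hasDerivAt_snd a b x t) hΦt
      (Vmat_mul_Rmat a b c1 c2 lam (x, t)) i).deriv⟩
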